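/- arXiv:2110.05613 — 9 statements merged into one kernel-verified Lean document; each statement's English description precedes it below -/
import Mathlib

section
/- Let G be a group and let θ, φ be automorphisms of G. Define B : G × G → G × G by B(x, y) = (φ(y), y·θ(x·φ(y)⁻¹)) and define N : G × G → G × G by N(a, z) = (θ⁻¹(φ⁻¹(a)⁻¹·z)·a, φ⁻¹(a)). Then N ∘ B = id and B ∘ N = id; i.e., B is a bijection with inverse N. -/
theorem stmt_1 {G : Type*} [Group G] (θ φ : G ≃* G)
    (B N : G × G → G × G)
    (hB : ∀ x y : G, B (x, y) = (φ y, y * θ (x * (φ y)⁻¹)))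
    (hN : ∀ a z : G, N (a, z) = (θ.symm ((φ.symm a)⁻¹ * z) * a, φ.symm a)) :
    N ∘ B = id ∧ B ∘ N = id := by
  constructor <;> funext p <;> obtain ⟨x, y⟩ := p <;>
    simp [hB, hN, mul_assoc]
end

section
/- Let G be a group, θ, φ automorphisms of G, and a, b, c, r, s, t, x, y, z elements of G satisfying: x = a·θ(r·s⁻¹), s = φ(a), z = b·θ(s·t⁻¹), t = φ(b), r = θ⁻¹(y⁻¹·c)·t, and y = φ⁻¹(t). Then y = b, z = b·θ(φ(a·b⁻¹)), and x = a·b⁻¹·c·θ(φ(b·a⁻¹)). -/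
theorem stmt_2 {G : Type*} [Group G] (θ φ : G ≃* G)
    (a b c r s t x y z : G)
    (h1 : x = a * θ (r * s⁻¹)) (h2 : s = φ a)
    (h3 : z = b * θ (s * t⁻¹)) (h4 : t = φ b)
    (h5 : r = θ.symm (y⁻¹ * c) * t) (h6 : y = φ.symm t) :
    y = b ∧ z = b * θ (φ (a * b⁻¹)) ∧ x = a * b⁻¹ * c * θ (φ (b * a⁻¹)) := by
  subst h1 h2 h3 h4 h5 h6
  refine ⟨by simp, by simp, ?_⟩
  simp [mul_assoc]
end

section
/- Let G be a group and θ, φ automorphisms of G with θ ∘ φ = φ ∘ θ. Define B : G × G → G × G by B(x, y) = (φ(y), y·θ(x·φ(y)⁻¹)). Then B satisfies the set-theoretic Yang–Baxter equation: (B × id) ∘ (id × B) ∘ (B × id) = (id × B) ∘ (B × id) ∘ (id × B) as maps G × G × G → G × G × G. -/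
theorem stmt_4 {G : Type*} [Group G] (θ φ : G ≃* G)
    (hcomm : ∀ g : G, θ (φ g) = φ (θ g))
    (B : G × G → G × G)
    (hB : ∀ x y : G, B (x, y) = (φ y, y * θ (x * (φ y)⁻¹)))
    (BL BR : G × G × G → G × G × G)
    (hBL : ∀ p : G × G × G, BL p = ((B (p.1, p.2.1)).1, (B (p.1, p.2.1)).2, p.2.2))
    (hBR : ∀ p : G × G × G, BR p = (p.1, B (p.2.1, p.2.2))) :
    BL ∘ BR ∘ BL = BR ∘ BL ∘ BR := by
  funext p
  obtain ⟨x, y, z⟩ := p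
  simp only [Function.comp, hBL, hBR, hB]
  ext <;> simp [hcomm, map_mul, map_inv, mul_assoc]
end

section
/- Let G be a group and θ, φ automorphisms of G, and define B : G × G → G × G by B(x, y) = (φ(y), y·θ(x·φ(y)⁻¹)). If B satisfies the set-theoretic Yang–Baxter equation (B × id)(id × B)(B × id) = (id × B)(B × id)(id × B), then θ ∘ φ = φ ∘ θ. -/
theorem stmt_5 {G : Type*} [Group G] (θ φ : G ≃* G)
    (B : G × G → G × G)
    (hB : ∀ x y : G, B (x, y) = (φ y, y * θ (x * (φ y)⁻¹)))
    (BL BR : G × G × G → G × G × G)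
    (hBL : ∀ p : G × G × G, BL p = ((B (p.1, p.2.1)).1, (B (p.1, p.2.1)).2, p.2.2))
    (hBR : ∀ p : G × G × G, BR p = (p.1, B (p.2.1, p.2.2)))
    (hYB : BL ∘ BR ∘ BL = BR ∘ BL ∘ BR) :
    ∀ g : G, θ (φ g) = φ (θ g) := by
  intro g
  have h := congrFun hYB (1, g, 1)
  simp only [Function.comp, hBL, hBR, hB, Prod.mk.injEq, map_one, mul_one, one_mul, inv_one,
    map_inv, mul_inv_cancel] at h
  simpa using h.2.1
end

section
/- Let G be a group and let η, θ, φ be automorphisms of G such that η commutes with θ and η commutes with φ. Define B(x, y) = (φ(y), y·θ(x·φ(y)⁻¹)) and V(x, y) = (η(y), η⁻¹(x)). Then (V × id)(id × B)(V × id) = (id × V)(B × id)(id × V) as maps G³ → G³. -/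
theorem stmt_8 {G : Type*} [Group G] (η θ φ : G ≃* G)
    (hηθ : ∀ g : G, η (θ g) = θ (η g))
    (hηφ : ∀ g : G, η (φ g) = φ (η g))
    (B V : G × G → G × G)
    (hB : ∀ x y : G, B (x, y) = (φ y, y * θ (x * (φ y)⁻¹)))
    (hV : ∀ x y : G, V (x, y) = (η y, η.symm x))
    (BL BR VL VR : G × G × G → G × G × G)
    (hBL : ∀ p : G × G × G, BL p = ((B (p.1, p.2.1)).1, (B (p.1, p.2.1)).2, p.2.2))
    (hBR : ∀ p : G × G × G, BR p = (p.1, B (p.2.1, p.2.2)))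
    (hVL : ∀ p : G × G × G, VL p = ((V (p.1, p.2.1)).1, (V (p.1, p.2.1)).2, p.2.2))
    (hVR : ∀ p : G × G × G, VR p = (p.1, V (p.2.1, p.2.2))) :
    VL ∘ BR ∘ VL = VR ∘ BL ∘ VR := by
  have hθs : ∀ g : G, η.symm (θ g) = θ (η.symm g) := by
    intro g
    apply η.injective
    rw [hηθ, MulEquiv.apply_symm_apply, MulEquiv.apply_symm_apply]
  have hφs : ∀ g : G, η.symm (φ g) = φ (η.symm g) := by
    intro g
    apply η.injective
    rw [hηφ, MulEquiv.apply_symm_apply, MulEquiv.apply_symm_apply]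
  funext p
  obtain ⟨x, y, z⟩ := p
  simp only [Function.comp_apply, hVL, hBR, hVR, hBL, hB, hV]
  simp only [map_mul, map_inv, hθs, hφs, hηφ, MulEquiv.apply_symm_apply, MulEquiv.symm_apply_apply]
end

section
/- Let G be a group and let E, O be automorphisms of G with E ∘ O = O ∘ E, such that for all a, b ∈ G: b·E(O(a))·E(E(b⁻¹)) = b·O(E(a·b⁻¹)). Then E = O. -/
theorem stmt_13 {G : Type*} [Group G] (E O : G ≃* G)
    (hcomm : ∀ g : G, E (O g) = O (E g))
    (h : ∀ a b : G, b * E (O a) * E (E b⁻¹) = b * O (E (a * b⁻¹))) :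
    ∀ g : G, E g = O g := by
  intro g
  have key : ∀ b : G, E (E b⁻¹) = O (E b⁻¹) := by
    intro b
    have h1 := h 1 b
    rw [mul_assoc] at h1
    have h2 := mul_left_cancel h1
    rw [map_mul, map_mul, ← hcomm] at h2
    exact mul_left_cancel h2
  simpa using key (E.symm g)⁻¹
end

section
/- Let G be a group and let E, O be automorphisms of G such that for all a, b ∈ G: b·E(O⁻¹(a))·b⁻¹ = b·O⁻¹(E(a·b⁻¹)). Then E = O. -/
theorem stmt_14 {G : Type*} [Group G] (E O : G ≃* G)
    (h : ∀ a b : G, b * E (O.symm a) * b⁻¹ = b * O.symm (E (a * b⁻¹))) :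
    ∀ g : G, E g = O g := by
  have h1 : ∀ a : G, E (O.symm a) = O.symm (E a) := by
    intro a
    have := h a 1
    simpa using this
  intro g
  have h2 := h 1 g⁻¹
  have : g = O.symm (E g) := by
    have := mul_left_cancel (by simpa using h2 : g⁻¹ * g = g⁻¹ * O.symm (E g))
    simpa using this
  calc E g = O (O.symm (E g)) := (O.apply_symm_apply _).symm
    _ = O g := by rw [← this]
end

section
/- Let G be a group and let E, O be automorphisms of G such that for all a, b, c ∈ G: a·b⁻¹·c·O(b·a⁻¹) = a·b⁻¹·E⁻¹(O(c·E(b·a⁻¹)·b⁻¹))·b. Then E = O. -/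
theorem stmt_15 {G : Type*} [Group G] (E O : G ≃* G)
    (h : ∀ a b c : G, a * b⁻¹ * c * O (b * a⁻¹) =
      a * b⁻¹ * E.symm (O (c * E (b * a⁻¹) * b⁻¹)) * b) :
    ∀ g : G, E g = O g := by
  intro g
  have := h 1 1 g
  simp at this
  nth_rewrite 1 [this]
  exact E.apply_symm_apply _
end

section
/- Let G be a group and let E, O, e, o be automorphisms of G. Suppose that for all a, b, c ∈ G the following three equations hold: (i) a·O(E⁻¹(e⁻¹(o(b⁻¹))·c)·o(b·a⁻¹)) = E⁻¹(O(a·o(e⁻¹(b⁻¹))·c·o(O(o(e⁻¹(b))·a⁻¹)·e⁻¹(b⁻¹))))·b; (ii) e⁻¹(o(b)) = o(e⁻¹(b)); (iii) b·O(o(a)·o(b⁻¹)) = o(e⁻¹(b)·O(a·o(e⁻¹(b)))). Then E ∘ O = O ∘ E, e ∘ o = o ∘ e, and O ∘ o = o ∘ O. -/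
theorem stmt_16 {G : Type*} [Group G] (E O e o : G ≃* G)
    (h1 : ∀ a b c : G,
      a * O (E.symm (e.symm (o b⁻¹) * c) * o (b * a⁻¹)) =
        E.symm (O (a * o (e.symm b⁻¹) * c *
          o (O (o (e.symm b) * a⁻¹) * e.symm b⁻¹))) * b)
    (h2 : ∀ b : G, e.symm (o b) = o (e.symm b))
    (h3 : ∀ a b : G, b * O (o a * o b⁻¹) = o (e.symm b * O (a * o (e.symm b)))) :
    (∀ g : G, E (O g) = O (E g)) ∧
    (∀ g : G, e (o g) = o (e g)) ∧
    (∀ g : G, O (o g) = o (O g)) := by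
  refine ⟨fun g => ?_, fun g => ?_, fun g => ?_⟩
  · have h := h1 1 1 (E g)
    simp only [inv_one, map_one, one_mul, mul_one, MulEquiv.symm_apply_apply] at h
    rw [h, MulEquiv.apply_symm_apply]
  · have h := h2 (e g)
    rw [MulEquiv.symm_apply_apply] at h
    rw [← h, MulEquiv.apply_symm_apply]
  · have h := h3 g 1
    simpa using h
end
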